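/- Let ε_0 ∈ (0, e^{-e}) and let π be the prior defined by π(ε) = 1/(ε·ln(1/ε)·(ln ln(1/ε))²) for ε ∈ (0,ε_0) and π(ε) = 0 for ε ∈ [ε_0,1). Let x : ℕ → ℝ satisfy x_i ≥ -1 for all i. If Σ_{i=1}^∞ x_i² = ∞ and limsup_{n→∞} S_n/√(2·A_n²·ln ln(A_n²)) > 1, then limsup_{n→∞} K_n^π = ∞. -/

import Mathlib

open MeasureTheory Filter Set

/-- Partial sum `S_n = x_1 + ... + x_n`. -/
noncomputable def S (x : ℕ → ℝ) (n : ℕ) : ℝ := ∑ i ∈ Finset.range n, x i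

/-- Sum of squares `A_n² = x_1² + ... + x_n²`. -/
noncomputable def A2 (x : ℕ → ℝ) (n : ℕ) : ℝ := ∑ i ∈ Finset.range n, (x i) ^ 2

/-- Capital process of the Bayesian strategy with prior density `π`:
`K_n^π = ∫_0^1 ∏_{i=1}^n (1 + ε x_i) π(ε) dε`. -/
noncomputable def K (π : ℝ → ℝ) (x : ℕ → ℝ) (n : ℕ) : ℝ :=
  ∫ ε in Set.Ioo (0 : ℝ) 1, (∏ i ∈ Finset.range n, (1 + ε * x i)) * π ε

/-- Assumption 1: `π` is a prior density, bounded below by `δπ` near the origin,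
and `ε ↦ ε·π(ε)` is (weakly) increasing near the origin. -/
def Assumption1 (π : ℝ → ℝ) (επ δπ : ℝ) : Prop :=
  επ ∈ Set.Ioo (0 : ℝ) 1 ∧ 0 < δπ ∧
  (∀ ε ∈ Set.Icc (0 : ℝ) 1, 0 ≤ π ε) ∧
  MeasureTheory.IntegrableOn π (Set.Icc (0 : ℝ) 1) ∧
  (∀ ε ∈ Set.Ioo (0 : ℝ) επ, δπ ≤ π ε) ∧
  MonotoneOn (fun ε => ε * π ε) (Set.Ioo (0 : ℝ) επ)

/-!
Write `a = A_n²`, `L = ln ln a` and `b = √(2L/a)`, the bet maximising `ε S_n - ε² a / 2` when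
`S_n = √(2aL)`. For `x_i ≥ -1` and `ε ≤ 1/2` the log-capital satisfies
`ln ∏ (1 + ε x_i) ≥ ε S_n - ε² a / 2 - 2 ε³ a`, so on the infinitely many `n` with
`S_n ≥ (1 + δ)√(2aL)` every bet `ε ∈ [b, (1 + δ) b]` turns the unit capital into at least
`exp ((1 + δ) L)`. There the prior density is at least
`1 / (2b · ln a · L²) = 1 / (2b · exp L · L²)`, so integrating over this interval of length `δ b`
gives `K_n ≥ (δ/2) exp (δ L) / L²`, which is unbounded as `L → ∞`.
-/

open Real Topology

lemma sub_sq_div_two_add_two_mul_cube_le_log_one_add {t : ℝ} (ht : -1 / 2 ≤ t) (ht0 : t ≤ 0) :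
    t - t ^ 2 / 2 + 2 * t ^ 3 ≤ log (1 + t) := by
  have habs : |-t| = -t := abs_of_nonneg (by linarith)
  have hseries := abs_log_sub_add_sum_range_le (x := -t) (by rw [habs]; linarith) 2
  norm_num [Finset.sum_range_succ, habs] at hseries
  have htail : (-t) ^ 3 / (1 + t) ≤ -2 * t ^ 3 := by
    rw [div_le_iff₀ (by linarith)]
    nlinarith [mul_nonneg (pow_nonneg (neg_nonneg.2 ht0) 3) (by linarith : 0 ≤ 1 + 2 * t)]
  linarith [(abs_le.1 (hseries.trans htail)).1]

lemma mul_sub_le_log_one_add_mul {y ε : ℝ} (hy : -1 ≤ y) (hε : 0 ≤ ε) (hε' : ε ≤ 1 / 2) :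
    ε * y - (ε * y) ^ 2 / 2 - 2 * ε ^ 3 * y ^ 2 ≤ log (1 + ε * y) := by
  rcases le_total 0 y with hy0 | hy0
  · have ht : 0 ≤ ε * y := mul_nonneg hε hy0
    have hpade : ε * y - (ε * y) ^ 2 / 2 ≤ 2 * (ε * y) / (ε * y + 2) := by
      rw [le_div_iff₀ (by linarith)]
      nlinarith [pow_nonneg ht 3]
    nlinarith [le_log_one_add_of_nonneg ht, pow_nonneg hε 3]
  · have hcube : -(y ^ 2) ≤ y ^ 3 := by nlinarith [sq_nonneg y]
    have hlog := sub_sq_div_two_add_two_mul_cube_le_log_one_add (t := ε * y)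
      (by nlinarith) (by nlinarith)
    nlinarith [pow_nonneg hε 3]

lemma exp_le_prod_one_add_mul {x : ℕ → ℝ} (hx : ∀ i, -1 ≤ x i) (n : ℕ) {ε : ℝ} (hε : 0 < ε)
    (hε' : ε ≤ 1 / 2) :
    exp (ε * S x n - ε ^ 2 * A2 x n / 2 - 2 * ε ^ 3 * A2 x n)
      ≤ ∏ i ∈ Finset.range n, (1 + ε * x i) := by
  have hpos : ∀ i, 0 < 1 + ε * x i := fun i => by nlinarith [hx i]
  rw [← Finset.prod_congr rfl fun i _ => exp_log (hpos i), ← exp_sum, exp_le_exp]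
  have hsum : ε * S x n - ε ^ 2 * A2 x n / 2 - 2 * ε ^ 3 * A2 x n
      = ∑ i ∈ Finset.range n, (ε * x i - (ε * x i) ^ 2 / 2 - 2 * ε ^ 3 * x i ^ 2) := by
    simp only [S, A2, Finset.mul_sum, Finset.sum_div, ← Finset.sum_sub_distrib]
    exact Finset.sum_congr rfl fun i _ => by ring
  rw [hsum]
  exact Finset.sum_le_sum fun i _ => mul_sub_le_log_one_add_mul (hx i) hε.le hε'

noncomputable def iterLogDensity (ε : ℝ) : ℝ := 1 / (ε * log (1 / ε) * (log (log (1 / ε))) ^ 2)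

noncomputable def iterLogPrior (ε₀ ε : ℝ) : ℝ := if ε < ε₀ then iterLogDensity ε else 0

lemma exp_one_lt_log_one_div {ε : ℝ} (hε : 0 < ε) (hε' : ε < exp (-exp 1)) :
    exp 1 < log (1 / ε) := by
  rw [one_div, log_inv, lt_neg, ← log_exp (-exp 1)]
  exact log_lt_log hε hε'

lemma one_lt_log_log_one_div {ε : ℝ} (hε : 0 < ε) (hε' : ε < exp (-exp 1)) :
    1 < log (log (1 / ε)) := by
  have hlog := exp_one_lt_log_one_div hε hε'
  rwa [lt_log_iff_exp_lt ((exp_pos 1).trans hlog)]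

lemma iterLogDensity_pos {ε : ℝ} (hε : 0 < ε) (hε' : ε < exp (-exp 1)) :
    0 < iterLogDensity ε := by
  rw [iterLogDensity]
  have hlog := (exp_pos 1).trans (exp_one_lt_log_one_div hε hε')
  have hloglog := one_pos.trans (one_lt_log_log_one_div hε hε')
  positivity

lemma iterLogPrior_nonneg {ε₀ ε : ℝ} (hε₀ : ε₀ ≤ exp (-exp 1)) (hε : 0 < ε) :
    0 ≤ iterLogPrior ε₀ ε := by
  unfold iterLogPrior
  split_ifs with h
  · exact (iterLogDensity_pos hε (h.trans_le hε₀)).le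
  · exact le_rfl

lemma hasDerivAt_inv_log_log_one_div {ε : ℝ} (hε : 0 < ε) (hε' : ε < exp (-exp 1)) :
    HasDerivAt (fun ε => (log (log (1 / ε)))⁻¹) (iterLogDensity ε) ε := by
  have hlog := (exp_pos 1).trans (exp_one_lt_log_one_div hε hε')
  have hloglog := one_pos.trans (one_lt_log_log_one_div hε hε')
  have h := (((hasDerivAt_inv hε.ne').log (by positivity)).log (by simpa using hlog.ne')).inv
    (by simpa using hloglog.ne')
  simp only [iterLogDensity, one_div] at h hlog hloglog ⊢
  refine HasDerivAt.congr_deriv (f := fun ε => (log (log ε⁻¹))⁻¹) h ?_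
  field_simp

lemma continuousOn_inv_log_log_one_div {b : ℝ} (hb : b < exp (-exp 1)) :
    ContinuousOn (fun ε => (log (log (1 / ε)))⁻¹) (Icc 0 b) := by
  intro ε hε
  rcases hε.1.eq_or_lt with rfl | hε0
  · have hlim : Tendsto (fun ε : ℝ => (log (log (1 / ε)))⁻¹) (𝓝[>] 0) (𝓝 0) := by
      simpa only [one_div, Function.comp_def, Pi.inv_def] using
        (tendsto_log_atTop.comp (tendsto_log_atTop.comp tendsto_inv_nhdsGT_zero)).inv_tendsto_atTop
    have hcont : ContinuousWithinAt (fun ε : ℝ => (log (log (1 / ε)))⁻¹) (Ici 0) 0 := by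
      rw [← continuousWithinAt_Ioi_iff_Ici, ContinuousWithinAt]
      simpa using hlim
    exact hcont.mono Icc_subset_Ici_self
  · exact (hasDerivAt_inv_log_log_one_div hε0 (hε.2.trans_lt hb)).continuousAt.continuousWithinAt

lemma integrableOn_iterLogPrior {ε₀ : ℝ} (hε₀ : ε₀ < exp (-exp 1)) :
    IntegrableOn (iterLogPrior ε₀) (Ioi 0) := by
  have hind : iterLogPrior ε₀ = (Iio ε₀).indicator iterLogDensity := by
    ext ε
    simp [iterLogPrior, indicator]
  have hIoc : IntegrableOn iterLogDensity (Ioc 0 ε₀) :=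
    intervalIntegral.integrableOn_deriv_of_nonneg (continuousOn_inv_log_log_one_div hε₀)
      (fun ε hε => hasDerivAt_inv_log_log_one_div hε.1 (hε.2.trans hε₀))
      (fun ε hε => (iterLogDensity_pos hε.1 (hε.2.trans hε₀)).le)
  rw [hind, integrableOn_indicator_iff measurableSet_Iio]
  exact hIoc.mono_set fun ε hε => ⟨hε.2, hε.1.le⟩

lemma le_iterLogPrior {ε₀ ε u : ℝ} (hε₀ : ε₀ < exp (-exp 1)) (hε : 0 < ε) (hεε₀ : ε < ε₀)
    (hu : 1 / ε ≤ u) :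
    1 / (ε * log u * (log (log u)) ^ 2) ≤ iterLogPrior ε₀ ε := by
  have hlog := (exp_pos 1).trans (exp_one_lt_log_one_div hε (hεε₀.trans hε₀))
  have hloglog := one_pos.trans (one_lt_log_log_one_div hε (hεε₀.trans hε₀))
  have hlog_le : log (1 / ε) ≤ log u := log_le_log (by positivity) hu
  have hloglog_le : log (log (1 / ε)) ≤ log (log u) := log_le_log hlog hlog_le
  rw [iterLogPrior, if_pos hεε₀, iterLogDensity]
  gcongr
  exact mul_nonneg hε.le (hlog.trans_le hlog_le).le

lemma prod_one_add_mul_nonneg {x : ℕ → ℝ} (hx : ∀ i, -1 ≤ x i) (n : ℕ) {ε : ℝ}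
    (hε : ε ∈ Icc (0 : ℝ) 1) : 0 ≤ ∏ i ∈ Finset.range n, (1 + ε * x i) :=
  Finset.prod_nonneg fun i _ => by nlinarith [hx i, hε.1, hε.2]

lemma integrableOn_prod_one_add_mul_mul {ρ : ℝ → ℝ} (hρ : IntegrableOn ρ (Ioo 0 1))
    (x : ℕ → ℝ) (n : ℕ) :
    IntegrableOn (fun ε => (∏ i ∈ Finset.range n, (1 + ε * x i)) * ρ ε) (Ioo 0 1) := by
  have hcont : Continuous fun ε : ℝ => ∏ i ∈ Finset.range n, (1 + ε * x i) := by fun_prop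
  rw [← integrableOn_Icc_iff_integrableOn_Ioo] at hρ ⊢
  exact hρ.continuousOn_mul hcont.continuousOn isCompact_Icc

lemma mul_le_K_of_le_on_Icc {ρ : ℝ → ℝ} (hρ0 : ∀ ε ∈ Ioo (0 : ℝ) 1, 0 ≤ ρ ε)
    (hρ : IntegrableOn ρ (Ioo 0 1)) {x : ℕ → ℝ} (hx : ∀ i, -1 ≤ x i) (n : ℕ) {α β c : ℝ}
    (hαβ : α ≤ β) (hsub : Icc α β ⊆ Ioo 0 1)
    (hc : ∀ ε ∈ Icc α β, c ≤ (∏ i ∈ Finset.range n, (1 + ε * x i)) * ρ ε) :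
    (β - α) * c ≤ K ρ x n := by
  have hint := integrableOn_prod_one_add_mul_mul hρ x n
  have hnonneg : 0 ≤ᵐ[volume.restrict (Ioo 0 1)]
      fun ε => (∏ i ∈ Finset.range n, (1 + ε * x i)) * ρ ε :=
    ae_restrict_of_forall_mem measurableSet_Ioo fun ε hε =>
      mul_nonneg (prod_one_add_mul_nonneg hx n (Ioo_subset_Icc_self hε)) (hρ0 ε hε)
  calc (β - α) * c
      ≤ ∫ ε in Icc α β, (∏ i ∈ Finset.range n, (1 + ε * x i)) * ρ ε := by
        have := setIntegral_ge_of_const_le_real measurableSet_Icc measure_Icc_lt_top.ne hc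
          (hint.mono_set hsub)
        rwa [measureReal_def, Real.volume_Icc, ENNReal.toReal_ofReal (sub_nonneg.2 hαβ),
          mul_comm] at this
    _ ≤ K ρ x n := setIntegral_mono_set hint hnonneg hsub.eventuallyLE

noncomputable def lilBet (a : ℝ) : ℝ := √(2 * log (log a) / a)

lemma lilBet_sq_mul {a : ℝ} (ha : 0 < a) (hL : 0 ≤ log (log a)) :
    lilBet a ^ 2 * a = 2 * log (log a) := by
  rw [lilBet, sq_sqrt (by positivity)]
  field_simp

lemma lilBet_mul_sqrt {a : ℝ} (ha : 0 < a) (hL : 0 ≤ log (log a)) :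
    lilBet a * √(2 * a * log (log a)) = 2 * log (log a) := by
  rw [lilBet, ← sqrt_mul (by positivity)]
  have : 2 * log (log a) / a * (2 * a * log (log a)) = (2 * log (log a)) ^ 2 := by
    field_simp
  rw [this, sqrt_sq (by positivity)]

lemma one_div_le_lilBet {a : ℝ} (ha : 1 ≤ a) (hL : 1 / 2 ≤ log (log a)) : 1 / a ≤ lilBet a := by
  rw [lilBet, le_sqrt (by positivity) (by positivity), div_pow, one_pow,
    div_le_div_iff₀ (by positivity) (by positivity)]
  nlinarith

lemma tendsto_lilBet_atTop : Tendsto lilBet atTop (𝓝 0) := by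
  have hlog : Tendsto (fun a => log a / a) atTop (𝓝 0) :=
    isLittleO_log_id_atTop.tendsto_div_nhds_zero
  have hloglog : Tendsto (fun a => log (log a) / a) atTop (𝓝 0) := by
    have := (hlog.comp tendsto_log_atTop).mul hlog
    rw [zero_mul] at this
    refine this.congr' ?_
    filter_upwards [tendsto_log_atTop.eventually_gt_atTop 0] with a ha
    simp only [Function.comp_apply]
    field_simp
  have := (hloglog.const_mul 2).sqrt
  rw [mul_zero, sqrt_zero] at this
  show Tendsto (fun a => √(2 * log (log a) / a)) atTop (𝓝 0)
  simpa only [mul_div_assoc] using this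

lemma one_add_mul_le_exponent {a L s e δ θ : ℝ} (hL : 0 ≤ L) (he : 0 ≤ e)
    (hea : e ^ 2 * a = 2 * L) (hs : (1 + δ) * (2 * L) ≤ e * s) (heδ : e ≤ δ / 32) (hδ : δ ≤ 1)
    (hθ : 1 ≤ θ) (hθδ : θ ≤ 1 + δ) :
    (1 + δ) * L ≤ θ * e * s - (θ * e) ^ 2 * a / 2 - 2 * (θ * e) ^ 3 * a := by
  have hlin : θ * (1 + δ) * (2 * L) ≤ θ * e * s := by
    rw [mul_assoc, mul_assoc]; exact mul_le_mul_of_nonneg_left hs (by linarith)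
  have hquad : (θ * e) ^ 2 * a / 2 = θ ^ 2 * L := by
    rw [mul_pow, mul_assoc, hea]; ring
  have hcube : 2 * (θ * e) ^ 3 * a ≤ δ * L := by
    have hθ3 : θ ^ 3 ≤ 2 ^ 3 := pow_le_pow_left₀ (by linarith) (by linarith) 3
    calc 2 * (θ * e) ^ 3 * a = 4 * θ ^ 3 * e * L := by
          rw [show 2 * (θ * e) ^ 3 * a = 2 * θ ^ 3 * e * (e ^ 2 * a) by ring, hea]; ring
      _ ≤ 4 * 2 ^ 3 * (δ / 32) * L := by gcongr
      _ = δ * L := by ring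
  -- `θ (2 + 2δ - θ) - (1 + 2δ) = (θ - 1)(1 + 2δ - θ)`
  have hgain : (1 + 2 * δ) * L ≤ θ * (1 + δ) * (2 * L) - θ ^ 2 * L := by
    have hθ' : θ ≤ 1 + 2 * δ := by linarith
    nlinarith [mul_nonneg (mul_nonneg (sub_nonneg.2 hθ) (sub_nonneg.2 hθ')) hL]
  linarith

lemma one_div_le_iterLogPrior_of_mem_Icc {ε₀ a ε : ℝ} (hε₀ : ε₀ < exp (-exp 1)) (ha : 1 < a)
    (hL : 1 ≤ log (log a)) (hbet₀ : lilBet a < ε₀ / 2) (hε : ε ∈ Icc (lilBet a) (2 * lilBet a)) :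
    1 / (2 * lilBet a * log a * log (log a) ^ 2) ≤ iterLogPrior ε₀ ε := by
  have hε0 : 0 < ε := (sqrt_pos.2 (by positivity)).trans_le hε.1
  have hinv : 1 / ε ≤ a := by
    rw [one_div_le hε0 (one_pos.trans ha)]
    exact (one_div_le_lilBet ha.le (by linarith)).trans hε.1
  refine le_trans ?_ (le_iterLogPrior hε₀ hε0 (by linarith [hε.2]) hinv)
  have hloga := log_pos ha
  gcongr
  exact hε.2

lemma le_K_iterLogPrior {ε₀ δ : ℝ} (hε₀ : ε₀ < exp (-exp 1)) {x : ℕ → ℝ} (hx : ∀ i, -1 ≤ x i)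
    {n : ℕ} (hδ : δ ≤ 1) (ha : 1 < A2 x n) (hL : 1 ≤ log (log (A2 x n)))
    (hbet : lilBet (A2 x n) ≤ δ / 32) (hbet₀ : lilBet (A2 x n) < ε₀ / 2)
    (hS : 1 + δ ≤ S x n / √(2 * A2 x n * log (log (A2 x n)))) :
    δ / 2 * exp (δ * log (log (A2 x n))) / log (log (A2 x n)) ^ 2
      ≤ K (iterLogPrior ε₀) x n := by
  set a := A2 x n
  set L := log (log a)
  set e := lilBet a
  have ha0 : 0 < a := one_pos.trans ha
  have he : 0 < e := sqrt_pos.2 (by positivity)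
  have hloga : 0 < log a := log_pos ha
  have hes : (1 + δ) * (2 * L) ≤ e * S x n := by
    rw [le_div_iff₀ (sqrt_pos.2 (by positivity))] at hS
    calc (1 + δ) * (2 * L) = e * ((1 + δ) * √(2 * a * L)) := by
          rw [← lilBet_mul_sqrt ha0 (by linarith)]; ring
      _ ≤ e * S x n := by gcongr
  have hbound : ∀ ε ∈ Icc e ((1 + δ) * e), exp ((1 + δ) * L) * (1 / (2 * e * log a * L ^ 2))
      ≤ (∏ i ∈ Finset.range n, (1 + ε * x i)) * iterLogPrior ε₀ ε := by
    rintro ε ⟨heε, hεe⟩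
    have hε : 0 < ε := he.trans_le heε
    have hprod : exp ((1 + δ) * L) ≤ ∏ i ∈ Finset.range n, (1 + ε * x i) := by
      refine (exp_le_exp.2 ?_).trans (exp_le_prod_one_add_mul hx n hε (by nlinarith))
      have := one_add_mul_le_exponent (θ := ε / e) (by linarith) he.le
        (lilBet_sq_mul ha0 (by linarith)) hes hbet hδ ((one_le_div he).2 heε)
        ((div_le_iff₀ he).2 hεe)
      rwa [div_mul_cancel₀ ε he.ne'] at this
    exact mul_le_mul hprod (one_div_le_iterLogPrior_of_mem_Icc hε₀ ha hL hbet₀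
      ⟨heε, hεe.trans (by nlinarith)⟩) (by positivity)
      (prod_one_add_mul_nonneg hx n ⟨hε.le, by nlinarith⟩)
  have hK := mul_le_K_of_le_on_Icc (fun ε hε => iterLogPrior_nonneg hε₀.le hε.1)
    ((integrableOn_iterLogPrior hε₀).mono_set Ioo_subset_Ioi_self) hx n
    (by nlinarith) (fun ε hε => ⟨he.trans_le hε.1, by nlinarith [hε.2]⟩) hbound
  convert hK using 1
  rw [← exp_log hloga, show (1 + δ) * L = L + δ * L by ring, exp_add]
  field_simp
  ring

lemma tendsto_mul_exp_div_sq_atTop {δ : ℝ} (hδ : 0 < δ) :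
    Tendsto (fun L => δ / 2 * exp (δ * L) / L ^ 2) atTop atTop := by
  refine ((tendsto_exp_mul_div_rpow_atTop 2 δ hδ).const_mul_atTop
    (by positivity : 0 < δ / 2)).congr fun L => ?_
  rw [rpow_two, mul_div_assoc]

lemma exists_frequently_lt_of_lt_limsup_coe {α : Type*} {l : Filter α} {u : α → ℝ} {b : ℝ}
    (h : (b : EReal) < limsup (fun n => (u n : EReal)) l) :
    ∃ c : ℝ, b < c ∧ ∃ᶠ n in l, c < u n := by
  obtain ⟨c, hbc, hc⟩ := EReal.exists_between_coe_real h
  exact ⟨c, EReal.coe_lt_coe_iff.1 hbc,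
    (frequently_lt_of_lt_limsup (by isBoundedDefault) hc).mono fun n => EReal.coe_lt_coe_iff.1⟩

lemma limsup_coe_eq_top_of_frequently_le {α : Type*} {l : Filter α} {u : α → ℝ}
    (h : ∀ M : ℝ, ∃ᶠ n in l, M ≤ u n) : limsup (fun n => (u n : EReal)) l = ⊤ := by
  refine (EReal.eq_top_iff_forall_lt _).2 fun M => ?_
  refine (EReal.coe_lt_coe_iff.2 (lt_add_one M)).trans_le (le_limsup_of_frequently_le' ?_)
  exact (h (M + 1)).mono fun n hn => EReal.coe_le_coe_iff.2 hn

theorem lil_prior_rate (ε₀ : ℝ) (hε₀ : ε₀ ∈ Set.Ioo 0 (Real.exp (-Real.exp 1)))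
    (x : ℕ → ℝ) (hx : ∀ i, -1 ≤ x i)
    (hA : Filter.Tendsto (A2 x) Filter.atTop Filter.atTop)
    (hls : 1 < Filter.limsup
      (fun n => ((S x n / Real.sqrt (2 * A2 x n * Real.log (Real.log (A2 x n))) : ℝ) : EReal))
      Filter.atTop) :
    Filter.limsup
      (fun n => ((K (fun ε => if ε < ε₀ then
          1 / (ε * Real.log (1 / ε) * (Real.log (Real.log (1 / ε))) ^ 2) else 0) x n : ℝ) : EReal))
      Filter.atTop = ⊤ := by
  obtain ⟨c, hc, hfreq⟩ := exists_frequently_lt_of_lt_limsup_coe (b := 1) (by exact_mod_cast hls)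
  set δ := min (c - 1) 1
  have hδ : 0 < δ := lt_min (by linarith) one_pos
  have hδc : 1 + δ ≤ c := by linarith [min_le_left (c - 1) 1]
  have hLlim := tendsto_log_atTop.comp (tendsto_log_atTop.comp hA)
  have hbetlim := tendsto_lilBet_atTop.comp hA
  change limsup (fun n => (K (iterLogPrior ε₀) x n : EReal)) atTop = ⊤
  refine limsup_coe_eq_top_of_frequently_le fun M => ?_
  have hev := (hA.eventually_gt_atTop 1).and <| (hLlim.eventually_ge_atTop 1).and <|
    (hbetlim.eventually (eventually_le_nhds (by positivity : 0 < δ / 32))).and <|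
    (hbetlim.eventually (eventually_lt_nhds (half_pos hε₀.1))).and <|
    hLlim.eventually ((tendsto_mul_exp_div_sq_atTop hδ).eventually_ge_atTop M)
  refine (hfreq.and_eventually hev).mono fun n ⟨hSn, ha, hLn, hbet, hbet₀, hM⟩ => ?_
  exact hM.trans <| le_K_iterLogPrior hε₀.2 hx (min_le_right _ _) ha hLn hbet hbet₀
    (hδc.trans hSn.le)
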